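/- Let a_• and b_• be graded families of ideals in a Noetherian commutative ring R, and for n ∈ ℕ let a_{n,•} denote the n-th truncation of a_•. Then ρ(a_•, b_•) = sup_{n≥1} ρ(a_{n,•}, b_•) = lim_{n→∞} ρ(a_{n,•}, b_•). -/
import Mathlib


open Filter

noncomputable section

/-- A graded family of ideals: `a p * a q ⊆ a (p+q)` for all `p, q ≥ 1`. -/
def IsGradedFamily {R : Type*} [CommSemiring R] (a : ℕ → Ideal R) : Prop :=
  ∀ p q : ℕ, 1 ≤ p → 1 ≤ q → a p * a q ≤ a (p + q)

/-- The resurgence `ρ(a_•, b_•) = sup{s/r : s,r ≥ 1, a_s ⊄ b_r}` (in `EReal`, so that the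
supremum of the empty set is `⊥ = -∞`). -/
def resurgence {R : Type*} [CommSemiring R] (a b : ℕ → Ideal R) : EReal :=
  sSup {x : EReal | ∃ s r : ℕ, 1 ≤ s ∧ 1 ≤ r ∧ ¬ (a s ≤ b r) ∧
    x = (((s : ℝ) / (r : ℝ) : ℝ) : EReal)}

/-- The asymptotic resurgence
`ρ̂(a_•, b_•) = sup{s/r : s,r ≥ 1, a_{st} ⊄ b_{rt} for all t ≫ 0}` (in `EReal`). -/
def asymptoticResurgence {R : Type*} [CommSemiring R] (a b : ℕ → Ideal R) : EReal :=
  sSup {x : EReal | ∃ s r : ℕ, 1 ≤ s ∧ 1 ≤ r ∧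
    (∀ᶠ t in atTop, ¬ (a (s * t) ≤ b (r * t))) ∧
    x = (((s : ℝ) / (r : ℝ) : ℝ) : EReal)}

/-- The `n`-th truncation of a graded family: `a_{n,k} = a_k` for `k ≤ n`, and
`a_{n,k} = Σ_{i,j>0, i+j=k} a_{n,i}·a_{n,j}` for `k > n`. -/
def truncation {R : Type*} [CommSemiring R] (a : ℕ → Ideal R) (n : ℕ) (k : ℕ) : Ideal R :=
  Nat.strongRecOn k fun k ih =>
    if k ≤ n then a k
    else ⨆ i : Fin k, ⨆ h : 0 < i.val,
      ih i.val i.isLt *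
      ih (k - i.val) (Nat.sub_lt (Nat.lt_of_le_of_lt (Nat.zero_le _) i.isLt) h)

theorem truncation_def {R : Type*} [CommSemiring R] (a : ℕ → Ideal R) (n k : ℕ) :
    truncation a n k = if k ≤ n then a k
      else ⨆ i : Fin k, ⨆ _ : 0 < i.val,
        truncation a n i.val * truncation a n (k - i.val) := by
  rw [truncation, Nat.strongRecOn, WellFounded.fix_eq]
  rfl

theorem truncation_le {R : Type*} [CommSemiring R] {a : ℕ → Ideal R}
    (ha : IsGradedFamily a) (n : ℕ) : ∀ k, truncation a n k ≤ a k := by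
  intro k
  induction k using Nat.strong_induction_on with
  | _ k ih =>
    rw [truncation_def]
    split_ifs with h
    · exact le_rfl
    · refine iSup₂_le fun i hi => ?_
      have hik : i.val < k := i.isLt
      calc truncation a n i.val * truncation a n (k - i.val)
          ≤ a i.val * a (k - i.val) :=
            Ideal.mul_mono (ih i.val hik) (ih (k - i.val) (Nat.sub_lt (Nat.lt_of_lt_of_le hi hik.le) hi))
        _ ≤ a (i.val + (k - i.val)) :=
            ha i.val (k - i.val) hi (Nat.le_sub_of_add_le (by omega))
        _ = a k := by rw [Nat.add_sub_cancel' hik.le]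

theorem truncation_mono {R : Type*} [CommSemiring R] {a : ℕ → Ideal R}
    (ha : IsGradedFamily a) {n m : ℕ} (hnm : n ≤ m) :
    ∀ k, truncation a n k ≤ truncation a m k := by
  intro k
  induction k using Nat.strong_induction_on with
  | _ k ih =>
    rw [truncation_def a n, truncation_def a m]
    split_ifs with h1 h2 h2
    · exact le_rfl
    · exact absurd (h1.trans hnm) h2
    · -- n < k ≤ m
      refine iSup₂_le fun i hi => ?_
      have hik : i.val < k := i.isLt
      calc truncation a n i.val * truncation a n (k - i.val)
          ≤ a i.val * a (k - i.val) :=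
            Ideal.mul_mono (truncation_le ha n i.val) (truncation_le ha n (k - i.val))
        _ ≤ a (i.val + (k - i.val)) :=
            ha i.val (k - i.val) hi (Nat.le_sub_of_add_le (by omega))
        _ = a k := by rw [Nat.add_sub_cancel' hik.le]
    · refine iSup₂_le fun i hi => ?_
      have hik : i.val < k := i.isLt
      exact le_trans
        (Ideal.mul_mono (ih i.val hik)
          (ih (k - i.val) (Nat.sub_lt (Nat.lt_of_lt_of_le hi hik.le) hi)))
        (le_iSup₂_of_le i hi le_rfl)

theorem truncation_eq_of_le {R : Type*} [CommSemiring R] (a : ℕ → Ideal R) {n k : ℕ}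
    (h : k ≤ n) : truncation a n k = a k := by
  rw [truncation_def, if_pos h]

theorem resurgence_mono_left {R : Type*} [CommSemiring R] {a₁ a₂ b : ℕ → Ideal R}
    (h : ∀ k, a₁ k ≤ a₂ k) : resurgence a₁ b ≤ resurgence a₂ b := by
  refine sSup_le_sSup ?_
  rintro x ⟨s, r, hs, hr, hns, rfl⟩
  exact ⟨s, r, hs, hr, fun hle => hns ((h s).trans hle), rfl⟩

/-- Theorem `thm.resurgencetruncation1`, resurgence part. For graded
families `a_•`, `b_•` of ideals in a Noetherian commutative ring,
`ρ(a_•, b_•) = sup_{n ≥ 1} ρ(a_{n,•}, b_•) = lim_{n→∞} ρ(a_{n,•}, b_•)`. -/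
theorem resurgence_truncation
    {R : Type*} [CommRing R] [IsNoetherianRing R]
    (a b : ℕ → Ideal R) (ha : IsGradedFamily a) (hb : IsGradedFamily b) :
    resurgence a b =
        sSup {x : EReal | ∃ n : ℕ, 1 ≤ n ∧ x = resurgence (truncation a n) b} ∧
      Tendsto (fun n : ℕ => resurgence (truncation a n) b) atTop
        (nhds (resurgence a b)) := by
  set f : ℕ → EReal := fun n => resurgence (truncation a n) b with hf
  have h1 : ∀ n, f n ≤ resurgence a b := fun n =>
    resurgence_mono_left (truncation_le ha n)
  have hmem : ∀ x ∈ {x : EReal | ∃ s r : ℕ, 1 ≤ s ∧ 1 ≤ r ∧ ¬ (a s ≤ b r) ∧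
      x = (((s : ℝ) / (r : ℝ) : ℝ) : EReal)}, ∃ s : ℕ, 1 ≤ s ∧ x ≤ f s := by
    rintro x ⟨s, r, hs, hr, hns, rfl⟩
    refine ⟨s, hs, le_sSup ⟨s, r, hs, hr, ?_, rfl⟩⟩
    rw [truncation_eq_of_le a le_rfl]
    exact hns
  have hmono : Monotone f := fun n m hnm =>
    resurgence_mono_left (truncation_mono ha hnm)
  have hsup : (⨆ n, f n) = resurgence a b := by
    refine le_antisymm (iSup_le h1) (sSup_le fun x hx => ?_)
    obtain ⟨s, _, hxs⟩ := hmem x hx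
    exact hxs.trans (le_iSup f s)
  constructor
  · refine le_antisymm (sSup_le fun x hx => ?_) (sSup_le ?_)
    · obtain ⟨s, hs, hxs⟩ := hmem x hx
      exact hxs.trans (le_sSup ⟨s, hs, rfl⟩)
    · rintro x ⟨n, hn, rfl⟩
      exact h1 n
  · rw [← hsup]
    exact tendsto_atTop_iSup hmono

end
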